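/- Let p : F → E be a functor, f : ξ → ξ' a cartesian morphism lying over φ : S → S', G a finite group of order n, and ρ : G → Aut_S(ξ) a group homomorphism. Assume the kernel A = Aut_ξ(ξ') of the restriction homomorphism res : Aut_{S'}(ξ') → Aut_S(ξ) is abelian and uniquely n-divisible (for every h ∈ A there is a unique g ∈ A with g^n = h). If for every σ ∈ G there exists σ' ∈ Aut_{S'}(ξ') with res(σ') = ρ(σ), then there exists a group homomorphism ρ' : G → Aut_{S'}(ξ') with res ∘ ρ' = ρ. -/

import Mathlib

/-! Pick set-theoretic lifts `s σ` of the `ρ σ`. Their defect `s σ * s τ * (s (σ * τ))⁻¹` is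
a 2-cocycle of `G` with values in the abelian kernel `A` of `res`, on which `G` acts by
conjugation through the lifts. Averaging the cocycle identity over `G` shows that `f ^ |G|` is a
coboundary for every 2-cocycle `f`, so unique `|G|`-divisibility of `A` makes `f` itself a
coboundary. Dividing `s` by a trivializing cochain turns it into a homomorphism. -/

open CategoryTheory

/-- A morphism `f : ξ ⟶ ξ'` is cartesian for the functor `p : F ⥤ E` if for every
object `ζ` lying over `S = p.obj ξ`, composition with `f` gives a bijection between
morphisms `ζ ⟶ ξ` lying over `𝟙 S` and morphisms `ζ ⟶ ξ'` lying over `φ = p.map f`. -/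
def IsCartesianMor {F E : Type*} [Category F] [Category E] (p : F ⥤ E)
    {ξ ξ' : F} (f : ξ ⟶ ξ') : Prop :=
  ∀ (ζ : F) (e : p.obj ζ = p.obj ξ),
    Function.Bijective (fun h : {h : ζ ⟶ ξ // p.map h = eqToHom e} =>
      (⟨h.1 ≫ f, by rw [p.map_comp, h.2]⟩ :
        {g : ζ ⟶ ξ' // p.map g = eqToHom e ≫ p.map f}))

/-- The subgroup of `Aut ξ` consisting of automorphisms lying over the identity
of `S = p.obj ξ`. -/
def vertAut {F E : Type*} [Category F] [Category E] (p : F ⥤ E) (ξ : F) :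
    Subgroup (Aut ξ) where
  carrier := {σ | p.map σ.hom = 𝟙 (p.obj ξ)}
  one_mem' := p.map_id ξ
  mul_mem' := by
    intro σ τ hσ hτ
    show p.map (τ.hom ≫ σ.hom) = 𝟙 _
    rw [p.map_comp, hσ, hτ, Category.id_comp]
  inv_mem' := by
    intro σ hσ
    show p.map σ.symm.hom = 𝟙 _
    have h : p.map σ.hom = 𝟙 _ := hσ
    calc p.map σ.inv = p.map σ.hom ≫ p.map σ.inv := by rw [h, Category.id_comp]
      _ = p.map (σ.hom ≫ σ.inv) := (p.map_comp _ _).symm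
      _ = 𝟙 _ := (congrArg p.map (Iso.hom_inv_id σ)).trans (p.map_id ξ)

open groupCohomology (IsMulCocycle₂ IsMulCoboundary₂)

/-- Averaging: with `d g = ∏ⱼ f (g, j)`, the cocycle identity summed over `j` gives
`f (g, h) ^ |G| = g • d h / d (g * h) * d g`, so `|G|`-th roots of `d` trivialize `f`. -/
theorem isMulCoboundary₂_of_bijective_pow {G M : Type*} [Group G] [Finite G] [CommGroup M]
    [MulDistribMulAction G M] (hpow : Function.Bijective fun a : M ↦ a ^ Nat.card G)
    {f : G × G → M} (hf : IsMulCocycle₂ f) : IsMulCoboundary₂ f := by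
  have := Fintype.ofFinite G
  set d : G → M := fun g ↦ ∏ j, f (g, j)
  have hd (g h : G) : d (g * h) * f (g, h) ^ Nat.card G = g • d h * d g := by
    have hprod := Finset.prod_congr rfl fun j (_ : j ∈ Finset.univ) ↦ hf g h j
    rwa [Finset.prod_mul_distrib, Finset.prod_mul_distrib, Finset.prod_const, Finset.card_univ,
      ← Nat.card_eq_fintype_card, ← Finset.smul_prod',
      Fintype.prod_equiv (Equiv.mulLeft h) (fun j ↦ f (g, h * j)) (fun j ↦ f (g, j))
        fun _ ↦ rfl]
      at hprod
  choose x hx using fun g ↦ hpow.2 (d g)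
  refine ⟨x, fun g h ↦ hpow.1 ?_⟩
  simp only [mul_pow, div_pow, ← smul_pow', hx]
  rw [div_mul_eq_mul_div, ← hd, mul_div_cancel_left]

namespace Subgroup

variable {Γ : Type*} [Group Γ]

theorem bijective_pow_of_existsUnique {H : Subgroup Γ} {n : ℕ}
    (h : ∀ a ∈ H, ∃! b, b ∈ H ∧ b ^ n = a) : Function.Bijective fun b : H ↦ b ^ n := by
  refine ⟨fun x y hxy ↦ Subtype.ext ?_, fun a ↦ ?_⟩
  · have hxy : (x : Γ) ^ n = (y : Γ) ^ n := congrArg Subtype.val hxy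
    exact (h _ (pow_mem y.2 n)).unique ⟨x.2, hxy⟩ ⟨y.2, rfl⟩
  · obtain ⟨b, ⟨hb, hba⟩, -⟩ := h a a.2
    exact ⟨⟨b, hb⟩, Subtype.ext hba⟩

def quotientConj (N : Subgroup Γ) [N.Normal] [IsMulCommutative N] : Γ ⧸ N →* MulAut N :=
  QuotientGroup.lift _ MulAut.conjNormal fun a ha ↦ by
    ext b
    rw [MulAut.conjNormal_apply, MulAut.one_apply, mul_inv_eq_iff_eq_mul]
    exact congrArg Subtype.val (mul_comm' (⟨a, ha⟩ : N) b)

end Subgroup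

namespace MonoidHom

open scoped IsMulCommutative

variable {Γ Δ G : Type*} [Group Γ] [Group Δ] [Group G] {res : Γ →* Δ} {ρ : G →* Δ}

noncomputable def kerConj [IsMulCommutative res.ker] (hρ : ∀ g, ρ g ∈ res.range) :
    G →* MulAut res.ker :=
  res.ker.quotientConj.comp <|
    (QuotientGroup.quotientKerEquivRange res).symm.toMonoidHom.comp (ρ.codRestrict _ hρ)

theorem kerConj_apply [IsMulCommutative res.ker] (hρ : ∀ g, ρ g ∈ res.range) {g : G} {s : Γ}
    (hs : res s = ρ g) (a : res.ker) : (kerConj hρ g a : Γ) = s * a * s⁻¹ := by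
  have hmk : (QuotientGroup.quotientKerEquivRange res).symm (ρ.codRestrict _ hρ g) = s := by
    rw [MulEquiv.symm_apply_eq]
    exact Subtype.ext hs.symm
  simp only [kerConj, coe_comp, Function.comp_apply, MulEquiv.coe_toMonoidHom, hmk]
  exact MulAut.conjNormal_apply s a

def liftDefect {s : G → Γ} (hs : ∀ g, res (s g) = ρ g) : G × G → res.ker := fun gh ↦
  ⟨s gh.1 * s gh.2 * (s (gh.1 * gh.2))⁻¹, by simp [hs]⟩

section Defect

variable [IsMulCommutative res.ker] [MulDistribMulAction G res.ker] {s : G → Γ}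
  (hs : ∀ g, res (s g) = ρ g)
  (hact : ∀ g (a : res.ker), ((g • a : res.ker) : Γ) = s g * a * (s g)⁻¹)
include hact

theorem isMulCocycle₂_liftDefect : IsMulCocycle₂ (liftDefect hs) := by
  intro g h j
  rw [mul_comm]
  apply Subtype.ext
  simp only [liftDefect, Subgroup.coe_mul, hact, mul_assoc g h j]
  group

theorem exists_comp_eq_of_isMulCoboundary₂ (hcob : IsMulCoboundary₂ (liftDefect hs)) :
    ∃ ρ' : G →* Γ, res.comp ρ' = ρ := by
  obtain ⟨x, hx⟩ := hcob
  refine ⟨MonoidHom.mk' (fun g ↦ (x g : Γ)⁻¹ * s g) fun g h ↦ ?_, ?_⟩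
  · have hgh := congrArg Subtype.val (hx g h)
    rw [div_mul_eq_mul_div] at hgh
    simp only [liftDefect, div_eq_mul_inv, Subgroup.coe_mul, Subgroup.coe_inv, hact] at hgh
    show (x (g * h) : Γ)⁻¹ * s (g * h) = (x g : Γ)⁻¹ * s g * ((x h : Γ)⁻¹ * s h)
    rw [show s (g * h) = (s g * s h * (s (g * h))⁻¹)⁻¹ * s g * s h by group, ← hgh]
    group
  · ext g
    simp [hs, mem_ker.mp (x g).2]

end Defect

theorem exists_comp_eq_of_bijective_pow [Finite G] [IsMulCommutative res.ker]
    (hρ : ∀ g, ρ g ∈ res.range)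
    (hpow : Function.Bijective fun a : res.ker ↦ a ^ Nat.card G) :
    ∃ ρ' : G →* Γ, res.comp ρ' = ρ := by
  choose s hs using fun g ↦ mem_range.mp (hρ g)
  let := MulDistribMulAction.compHom res.ker (kerConj hρ)
  have hact (g : G) (a : res.ker) : ((g • a : res.ker) : Γ) = s g * a * (s g)⁻¹ :=
    kerConj_apply hρ (hs g) a
  exact exists_comp_eq_of_isMulCoboundary₂ hs hact <|
    isMulCoboundary₂_of_bijective_pow hpow (isMulCocycle₂_liftDefect hs hact)

end MonoidHom

theorem extension_exists_of_uniquely_divisible_general {F E : Type*} [Category F] [Category E]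
    (p : F ⥤ E) {ξ ξ' : F}
    {G : Type*} [Group G] [Finite G] (ρ : G →* vertAut p ξ)
    (res : vertAut p ξ' →* vertAut p ξ)
    (hA : ∀ a b : vertAut p ξ', a ∈ res.ker → b ∈ res.ker → a * b = b * a)
    (hdiv : ∀ h : vertAut p ξ', h ∈ res.ker →
      ∃! g : vertAut p ξ', g ∈ res.ker ∧ g ^ (Nat.card G) = h)
    (hsurj : ∀ σ : G, ρ σ ∈ res.range) :
    ∃ ρ' : G →* vertAut p ξ', res.comp ρ' = ρ := by
  have : IsMulCommutative res.ker := ⟨⟨fun a b ↦ Subtype.ext (hA a b a.2 b.2)⟩⟩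
  exact MonoidHom.exists_comp_eq_of_bijective_pow hsurj
    (Subgroup.bijective_pow_of_existsUnique hdiv)

/-- If `G` is a finite group of order `n`, the kernel `A = Aut_ξ(ξ')` of the
restriction homomorphism is abelian and uniquely `n`-divisible, and every `ρ(σ)`
lies in the image of `res`, then the `G`-action extends: there is a homomorphism
`ρ' : G → Aut_{S'}(ξ')` with `res ∘ ρ' = ρ`. -/
theorem extension_exists_of_uniquely_divisible {F E : Type*} [Category F] [Category E]
    (p : F ⥤ E) {ξ ξ' : F} (f : ξ ⟶ ξ') (hf : IsCartesianMor p f)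
    {G : Type*} [Group G] [Finite G] (ρ : G →* vertAut p ξ)
    (res : vertAut p ξ' →* vertAut p ξ)
    (hres : ∀ σ' : vertAut p ξ',
      f ≫ (σ' : Aut ξ').hom = ((res σ' : Aut ξ)).hom ≫ f)
    (hA : ∀ a b : vertAut p ξ', a ∈ res.ker → b ∈ res.ker → a * b = b * a)
    (hdiv : ∀ h : vertAut p ξ', h ∈ res.ker →
      ∃! g : vertAut p ξ', g ∈ res.ker ∧ g ^ (Nat.card G) = h)
    (hsurj : ∀ σ : G, ρ σ ∈ res.range) :
    ∃ ρ' : G →* vertAut p ξ', res.comp ρ' = ρ :=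
  extension_exists_of_uniquely_divisible_general p ρ res hA hdiv hsurj
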